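/- Let J ⊆ [n] and let μ^J_i = Σ_{k=i}^n (∏_{j∉J, j<i}(x_j² − x_k²))·x_k·∂_k for i = 1,...,n. Then the μ^J_i lie in Der(𝒜̃) where 𝒜̃ is the arrangement with linear forms x_j ± x_i (j ∉ J, j < i ≤ n) and x_i (all 1 ≤ i ≤ n); moreover μ^J_1, ..., μ^J_n are linearly independent over ℂ[x_1,...,x_n] (proof by triangularity: μ^J_i involves only ∂_i,...,∂_n with the coefficient of ∂_i nonzero). -/

import Mathlib

open MvPolynomial

/-- The defining linear forms of the extended arrangement `B̃_J`: `x_j − x_i` and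
`x_j + x_i` for `j ∉ J`, `j < i`, together with `x_i` for all `i`. -/
def formsBt {n : ℕ} (J : Finset (Fin n)) : Set (MvPolynomial (Fin n) ℂ) :=
  {p | (∃ j i, j ∉ J ∧ j < i ∧ (p = X j - X i ∨ p = X j + X i)) ∨ (∃ i, p = X i)}

/-- Coefficients of the derivation `μ^J_i = Σ_{k≥i} (∏_{j∉J, j<i}(x_j² − x_k²))·x_k·∂_k`. -/
noncomputable def mu {n : ℕ} (J : Finset (Fin n)) (i k : Fin n) : MvPolynomial (Fin n) ℂ :=
  if i ≤ k then (∏ j ∈ Finset.Iio i \ J, (X j ^ 2 - X k ^ 2)) * X k else 0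

/-!
Each form of the arrangement is `x_j - c x_i` with `c ∈ {1, -1}`, or `x_i`, and `μ^J_m` sends it
to `μ_{mj} - c μ_{mi}`, resp. `μ_{mi}`. The coefficient `μ_{mk}` is `x_k` times a polynomial in
`x_k²`; for `m ≤ j` the difference is divisible by `x_j - c x_i` because `x_j - c x_i` divides
`x_j² - x_i²`, while for `j < m ≤ i` the factor `x_j² - x_i²` already occurs in `μ_{mi}`.
The coefficient matrix `(μ_{mk})` is upper triangular with nonzero diagonal, so its rows are
independent over the domain `ℂ[x_1, …, x_n]`.
-/

theorem Finset.sub_dvd_prod_sub_sub_prod_sub {ι R : Type*} [CommRing R] (s : Finset ι)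
    (f : ι → R) (a b : R) : a - b ∣ ∏ i ∈ s, (f i - a) - ∏ i ∈ s, (f i - b) := by
  have h := Polynomial.sub_dvd_eval_sub a b (∏ i ∈ s, (Polynomial.C (f i) - Polynomial.X))
  simp only [Polynomial.eval_prod] at h
  simpa only [Polynomial.eval_sub, Polynomial.eval_C, Polynomial.eval_X] using h

theorem MvPolynomial.sum_mul_pderiv_X {σ R : Type*} [Fintype σ] [CommSemiring R]
    (θ : σ → MvPolynomial σ R) (t : σ) : ∑ k, θ k * pderiv k (X t) = θ t := by
  rw [Finset.sum_eq_single t (fun k _ hk => by rw [pderiv_X_of_ne hk.symm, mul_zero])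
    (by simp), pderiv_X_self, mul_one]

theorem MvPolynomial.X_sq_sub_X_sq_ne_zero {σ R : Type*} [CommRing R] [Nontrivial R]
    {j i : σ} (h : j ≠ i) : (X j ^ 2 - X i ^ 2 : MvPolynomial σ R) ≠ 0 := by
  classical
  intro hzero
  simpa [h, h.symm] using congrArg (eval (Pi.single j 1)) hzero

section mu

variable {n : ℕ} (J : Finset (Fin n))

theorem mu_of_le {i k : Fin n} (h : i ≤ k) :
    mu J i k = (∏ j ∈ Finset.Iio i \ J, (X j ^ 2 - X k ^ 2)) * X k :=
  if_pos h

theorem mu_of_lt {i k : Fin n} (h : k < i) : mu J i k = 0 :=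
  if_neg h.not_ge

theorem X_dvd_mu (m i : Fin n) : X i ∣ mu J m i := by
  rcases le_or_gt m i with h | h
  · rw [mu_of_le J h]
    exact dvd_mul_left _ _
  · rw [mu_of_lt J h]
    exact dvd_zero _

theorem X_sub_mul_X_dvd_mu_sub_mul_mu (m : Fin n) {j i : Fin n} (hj : j ∉ J) (hji : j < i)
    {c : MvPolynomial (Fin n) ℂ} (hc : c ^ 2 = 1) :
    X j - c * X i ∣ mu J m j - c * mu J m i := by
  set d := X j - c * X i
  have hd : d ∣ X j ^ 2 - X i ^ 2 := ⟨X j + c * X i, by linear_combination (X i) ^ 2 * hc⟩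
  rcases le_or_gt m j with hmj | hjm
  · rw [mu_of_le J hmj, mu_of_le J (hmj.trans hji.le)]
    set Pj : MvPolynomial (Fin n) ℂ := ∏ t ∈ Finset.Iio m \ J, (X t ^ 2 - X j ^ 2)
    set Pi : MvPolynomial (Fin n) ℂ := ∏ t ∈ Finset.Iio m \ J, (X t ^ 2 - X i ^ 2)
    have hP : d ∣ Pj - Pi := hd.trans (Finset.sub_dvd_prod_sub_sub_prod_sub _ _ _ _)
    rw [show Pj * X j - c * (Pi * X i) = Pj * d + (Pj - Pi) * (c * X i) by ring]
    exact dvd_add (dvd_mul_left _ _) (hP.mul_right _)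
  rcases le_or_gt m i with hmi | him
  · rw [mu_of_lt J hjm, mu_of_le J hmi, zero_sub, dvd_neg]
    have hfactor : (X j ^ 2 - X i ^ 2 : MvPolynomial (Fin n) ℂ) ∣
        ∏ t ∈ Finset.Iio m \ J, (X t ^ 2 - X i ^ 2) :=
      Finset.dvd_prod_of_mem _ (by simp [hjm, hj])
    exact ((hd.trans hfactor).mul_right _).mul_left _
  · rw [mu_of_lt J hjm, mu_of_lt J him, mul_zero, sub_zero]
    exact dvd_zero _

theorem mu_isUpperTriangular : Matrix.IsUpperTriangular (mu J) :=
  fun _ _ h => mu_of_lt J h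

theorem mu_self_ne_zero (i : Fin n) : mu J i i ≠ 0 := by
  rw [mu_of_le J le_rfl]
  refine mul_ne_zero (Finset.prod_ne_zero_iff.mpr fun t ht => ?_) (X_ne_zero i)
  exact X_sq_sub_X_sq_ne_zero (Finset.mem_Iio.mp (Finset.mem_sdiff.mp ht).1).ne

theorem det_mu_ne_zero : Matrix.det (mu J) ≠ 0 := by
  rw [Matrix.det_of_isUpperTriangular (mu_isUpperTriangular J)]
  exact Finset.prod_ne_zero_iff.mpr fun i _ => mu_self_ne_zero J i

end mu

/-- each `μ^J_i` lies in `Der(B̃_J)`, and `μ^J_1, …, μ^J_n` are linearly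
independent over `ℂ[x_1,…,x_n]`. -/
theorem stmt17 {n : ℕ} (J : Finset (Fin n)) :
    (∀ (i : Fin n) (α : MvPolynomial (Fin n) ℂ), α ∈ formsBt J →
      α ∣ ∑ k : Fin n, mu J i k * pderiv k α) ∧
    LinearIndependent (MvPolynomial (Fin n) ℂ)
      (fun i : Fin n => (mu J i : Fin n → MvPolynomial (Fin n) ℂ)) := by
  refine ⟨?_, Matrix.linearIndependent_rows_of_det_ne_zero (det_mu_ne_zero J)⟩
  rintro m α (⟨j, i, hj, hji, rfl | rfl⟩ | ⟨i, rfl⟩)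
  · simpa only [map_sub, mul_sub, Finset.sum_sub_distrib, sum_mul_pderiv_X, one_mul] using
      X_sub_mul_X_dvd_mu_sub_mul_mu J m hj hji (c := 1) (one_pow 2)
  · simpa only [map_add, mul_add, Finset.sum_add_distrib, sum_mul_pderiv_X, neg_mul, one_mul,
      sub_neg_eq_add] using
      X_sub_mul_X_dvd_mu_sub_mul_mu J m hj hji (c := -1) neg_one_sq
  · rw [sum_mul_pderiv_X]
    exact X_dvd_mu J m i
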